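/- arXiv:0712.0068 — 2 statements merged into one kernel-verified Lean document; each statement's English description precedes it below -/
import Mathlib

section
/- Let K be a field and S = K[x_1, ..., x_n] the polynomial ring. Every monomial ideal I ⊆ S admits a Stanley decomposition, i.e., I can be written as a finite direct sum of Stanley spaces: I = ⊕_{i=1}^r u_i K[Z_i] as K-vector spaces, where each u_i is a monomial of S and each Z_i ⊆ {x_1, ..., x_n}. -/
open MvPolynomial

/-- The Stanley space `u K[Z]`: the `K`-span of all monomials `u * v` where `v` is a
monomial in the variables of `Z`; the monomial `u` is given by its exponent vector `d`. -/
noncomputable def stanleySpace (K : Type*) [Field K] {σ : Type*} (d : σ →₀ ℕ)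
    (Z : Finset σ) : Submodule K (MvPolynomial σ K) :=
  Submodule.span K
    {m | ∃ e : σ →₀ ℕ, (e.support : Set σ) ⊆ (Z : Set σ) ∧ m = monomial (d + e) (1 : K)}

/-- A monomial ideal: an ideal generated by monomials. -/
def IsMonomialIdeal {K : Type*} [Field K] {σ : Type*}
    (I : Ideal (MvPolynomial σ K)) : Prop :=
  ∃ G : Set (σ →₀ ℕ), I = Ideal.span ((fun d => monomial d (1 : K)) '' G)

/-- A squarefree monomial ideal: an ideal generated by squarefree monomials. -/
def IsSquarefreeMonomialIdeal {K : Type*} [Field K] {σ : Type*}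
    (I : Ideal (MvPolynomial σ K)) : Prop :=
  ∃ G : Set (σ →₀ ℕ), (∀ d ∈ G, ∀ i, d i ≤ 1) ∧
    I = Ideal.span ((fun d => monomial d (1 : K)) '' G)

/-- `I^c`: the `K`-span of all monomials not belonging to `I`. -/
noncomputable def compSpan (K : Type*) [Field K] {σ : Type*}
    (I : Ideal (MvPolynomial σ K)) : Submodule K (MvPolynomial σ K) :=
  Submodule.span K
    {m | ∃ d : σ →₀ ℕ, monomial d (1 : K) ∉ I ∧ m = monomial d (1 : K)}

/-- `x_n^k V ⊆ S`: the image in `S = K[x_1,…,x_n]` of a `K`-subspace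
`V ⊆ S' = K[x_1,…,x_{n-1}]` under inclusion followed by multiplication by `x_n^k`. -/
noncomputable def shiftUp (K : Type*) [Field K] (n : ℕ) (k : ℕ)
    (V : Submodule K (MvPolynomial (Fin n) K)) :
    Submodule K (MvPolynomial (Fin (n + 1)) K) :=
  (V.map (rename (Fin.castSucc : Fin n → Fin (n + 1)) :
      MvPolynomial (Fin n) K →ₐ[K] MvPolynomial (Fin (n + 1)) K).toLinearMap).map
    (LinearMap.mulLeft K ((X (Fin.last n) : MvPolynomial (Fin (n + 1)) K) ^ k))

open Function

/-!
The exponents of the monomials in a monomial ideal `I` form an upper set `U ⊆ ℕⁿ`, and `I` is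
the `K`-span of these monomials; a Stanley space `u K[Z]` is the span of the monomials with
exponents in the box `u + ℕ^Z`. Since distinct monomials are linearly independent, it suffices to
partition `U` into finitely many boxes.

By Dickson's lemma `U` has finitely many minimal elements, so its slices
`U_k = {t ∈ ℕⁿ⁻¹ | (k, t) ∈ U}` increase with `k` and are constant from some `N` on. By
induction on `n` each slice is a finite disjoint union of boxes; placing the boxes of `U_k` at
height `k` for `k < N`, and those of `U_N` at all heights `≥ N` (adding `x_1` to `Z`), partitions
`U`.
-/

namespace Finsupp

variable {n : ℕ}

theorem cons_le_cons_iff {M : Type*} [Zero M] [LE M] {a b : M} {s t : Fin n →₀ M} :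
    cons a s ≤ cons b t ↔ a ≤ b ∧ s ≤ t := by
  simp [le_def, Fin.forall_fin_succ, cons_zero, cons_succ]

theorem le_cons_iff {M : Type*} [Zero M] [LE M] {b : M} {g : Fin (n + 1) →₀ M}
    {t : Fin n →₀ M} : g ≤ cons b t ↔ g 0 ≤ b ∧ tail g ≤ t := by
  conv_lhs => rw [← cons_tail g]
  exact cons_le_cons_iff

end Finsupp

theorem IsUpperSet.exists_finite_eq_upperClosure {α : Type*} [PartialOrder α]
    [WellQuasiOrderedLE α] {U : Set α} (hU : IsUpperSet U) :
    ∃ G : Set α, G.Finite ∧ U = upperClosure G := by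
  refine ⟨{x | Minimal (· ∈ U) x},
    WellQuasiOrderedLE.finite_of_isAntichain (setOfPred_minimal_antichain _), ?_⟩
  ext x
  simp only [SetLike.mem_coe, mem_upperClosure, Set.mem_ofPred_eq]
  constructor
  · intro hx
    obtain ⟨m, hmx, hm⟩ := exists_minimal_le_of_wellFoundedLT _ x hx
    exact ⟨m, hm, hmx⟩
  · rintro ⟨m, hm, hmx⟩
    exact hU hmx hm.prop

section Slice

open Finsupp

variable {n : ℕ}

def slice (U : Set (Fin (n + 1) →₀ ℕ)) (k : ℕ) : Set (Fin n →₀ ℕ) :=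
  {t | cons k t ∈ U}

theorem mem_iff_tail_mem_slice {U : Set (Fin (n + 1) →₀ ℕ)} {d : Fin (n + 1) →₀ ℕ} :
    d ∈ U ↔ tail d ∈ slice U (d 0) := by
  rw [slice, Set.mem_ofPred_eq, cons_tail]

theorem isUpperSet_slice {U : Set (Fin (n + 1) →₀ ℕ)} (hU : IsUpperSet U) (k : ℕ) :
    IsUpperSet (slice U k) :=
  fun _ _ hst hs => hU (cons_le_cons_iff.2 ⟨le_rfl, hst⟩) hs

theorem IsUpperSet.exists_slice_eq {U : Set (Fin (n + 1) →₀ ℕ)} (hU : IsUpperSet U) :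
    ∃ N, ∀ k, N ≤ k → slice U k = slice U N := by
  obtain ⟨G, hG, rfl⟩ := hU.exists_finite_eq_upperClosure
  obtain ⟨N, hN⟩ := (hG.image (· 0)).bddAbove
  have slice_eq : ∀ k, N ≤ k →
      slice (upperClosure G) k = {t | ∃ g ∈ G, tail g ≤ t} := by
    intro k hk
    ext t
    simp only [slice, SetLike.mem_coe, mem_upperClosure, Set.mem_ofPred_eq, le_cons_iff]
    exact exists_congr fun g =>
      and_congr_right fun hg => and_iff_right ((hN (Set.mem_image_of_mem _ hg)).trans hk)
  exact ⟨N, fun k hk => (slice_eq k hk).trans (slice_eq N le_rfl).symm⟩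

theorem eq_iUnion_slice_union_slice {U : Set (Fin (n + 1) →₀ ℕ)} {N : ℕ}
    (hN : ∀ k, N ≤ k → slice U k = slice U N) :
    U = (⋃ k : Fin N, {d | d 0 = (k : ℕ) ∧ tail d ∈ slice U k}) ∪
      {d | N ≤ d 0 ∧ tail d ∈ slice U N} := by
  ext d
  rw [mem_iff_tail_mem_slice]
  simp only [Set.mem_union, Set.mem_iUnion, Set.mem_ofPred_eq]
  rcases lt_or_ge (d 0) N with hd | hd
  · constructor
    · exact fun h => Or.inl ⟨⟨d 0, hd⟩, rfl, h⟩
    · rintro (⟨k, hk, h⟩ | ⟨hNd, -⟩)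
      · rwa [hk]
      · omega
  · rw [hN _ hd]
    constructor
    · exact fun h => Or.inr ⟨hd, h⟩
    · rintro (⟨k, hk, -⟩ | ⟨-, h⟩)
      · omega
      · exact h

end Slice

section StanleyBox

variable {σ : Type*}

def stanleyBox (u : σ →₀ ℕ) (Z : Finset σ) : Set (σ →₀ ℕ) :=
  (u + ·) '' {e | (e.support : Set σ) ⊆ Z}

theorem mem_stanleyBox {u d : σ →₀ ℕ} {Z : Finset σ} :
    d ∈ stanleyBox u Z ↔ u ≤ d ∧ ∀ i ∉ Z, d i = u i := by
  constructor
  · rintro ⟨e, he, rfl⟩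
    rw [Set.mem_ofPred_eq, Finsupp.support_subset_iff] at he
    exact ⟨le_self_add, fun i hi => by simp [he i hi]⟩
  · rintro ⟨hle, hZ⟩
    refine ⟨d - u, ?_, add_tsub_cancel_of_le hle⟩
    rw [Set.mem_ofPred_eq, Finsupp.support_subset_iff]
    intro i hi
    simp [hZ i hi]

theorem stanleyBox_empty (u : σ →₀ ℕ) : stanleyBox u ∅ = {u} := by
  ext d
  simp only [mem_stanleyBox, Finset.notMem_empty, not_false_eq_true, forall_const,
    Set.mem_singleton_iff]
  constructor
  · exact fun h => Finsupp.ext h.2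
  · rintro rfl
    exact ⟨le_rfl, fun _ => rfl⟩

theorem stanleySpace_eq_restrictSupport (K : Type*) [Field K] (u : σ →₀ ℕ) (Z : Finset σ) :
    stanleySpace K u Z = restrictSupport K (stanleyBox u Z) := by
  rw [restrictSupport_eq_span, stanleySpace, stanleyBox, Set.image_image]
  congr 1
  ext m
  simp [eq_comm]

end StanleyBox

section Lift

open Finsupp

variable {n : ℕ}

theorem stanleyBox_cons_map_succ (k : ℕ) (u : Fin n →₀ ℕ) (Z : Finset (Fin n)) :
    stanleyBox (cons k u) (Z.map (Fin.succEmb n)) =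
      {d | d 0 = k ∧ tail d ∈ stanleyBox u Z} := by
  ext d
  rw [← cons_tail d]
  generalize d 0 = a, tail d = t
  simp only [mem_stanleyBox, cons_le_cons_iff, Finset.mem_map, Fin.coe_succEmb, not_exists,
    not_and, Fin.forall_fin_succ, Fin.succ_ne_zero, not_false_eq_true, implies_true, cons_zero,
    forall_const, Fin.succ_inj, Finset.forall_mem_not_eq', cons_succ, Set.mem_ofPred_eq, tail_cons]
  grind

theorem stanleyBox_cons_insert_zero_map_succ (k : ℕ) (u : Fin n →₀ ℕ) (Z : Finset (Fin n)) :
    stanleyBox (cons k u) (insert 0 (Z.map (Fin.succEmb n))) =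
      {d | k ≤ d 0 ∧ tail d ∈ stanleyBox u Z} := by
  ext d
  rw [← cons_tail d]
  generalize d 0 = a, tail d = t
  simp only [mem_stanleyBox, cons_le_cons_iff, Finset.mem_insert, Finset.mem_map,
    Fin.coe_succEmb, not_or, not_exists, not_and, and_imp, Fin.forall_fin_succ, not_true_eq_false,
    Fin.succ_ne_zero, not_false_eq_true, implies_true, cons_zero, forall_const, IsEmpty.forall_iff,
    Fin.succ_inj, Finset.forall_mem_not_eq', cons_succ, true_and, Set.mem_ofPred_eq, tail_cons,
    and_assoc]

end Lift

def HasBoxDecomposition {σ : Type*} (U : Set (σ →₀ ℕ)) : Prop :=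
  ∃ (ι : Type) (_ : Finite ι) (u : ι → σ →₀ ℕ) (Z : ι → Finset σ),
    Pairwise (Disjoint on fun i => stanleyBox (u i) (Z i)) ∧ ⋃ i, stanleyBox (u i) (Z i) = U

namespace HasBoxDecomposition

variable {σ : Type*}

theorem of_finite {U : Set (σ →₀ ℕ)} (hU : U.Finite) : HasBoxDecomposition U := by
  have := hU.to_subtype
  let e := (Finite.equivFin U).symm
  refine ⟨_, inferInstance, fun i => e i, fun _ => ∅, fun i j hij => ?_, ?_⟩
  · simpa only [onFun, stanleyBox_empty, Set.disjoint_singleton] using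
      Subtype.val_injective.ne (e.injective.ne hij)
  · simp only [stanleyBox_empty, e.surjective.iUnion_comp fun x => {x.1},
      Set.iUnion_of_singleton_coe]

theorem iUnion {κ : Type} [Finite κ] {U : κ → Set (σ →₀ ℕ)}
    (hU : Pairwise (Disjoint on U)) (h : ∀ k, HasBoxDecomposition (U k)) :
    HasBoxDecomposition (⋃ k, U k) := by
  choose ι _ u Z hdisj hunion using h
  refine ⟨Σ k, ι k, inferInstance, fun p => u p.1 p.2, fun p => Z p.1 p.2, ?_, ?_⟩
  · rintro ⟨k, i⟩ ⟨l, j⟩ hne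
    by_cases hkl : k = l
    · subst hkl
      exact hdisj k fun hij => hne (congrArg (Sigma.mk k) hij)
    · refine (hU hkl).mono ?_ ?_
      · exact (Set.subset_iUnion _ i).trans (hunion k).le
      · exact (Set.subset_iUnion _ j).trans (hunion l).le
  · simp only [Set.iUnion_sigma, hunion]

theorem union {S T : Set (σ →₀ ℕ)} (hST : Disjoint S T) (hS : HasBoxDecomposition S)
    (hT : HasBoxDecomposition T) : HasBoxDecomposition (S ∪ T) := by
  rw [Set.union_eq_iUnion]
  refine iUnion ?_ (Bool.forall_bool.2 ⟨hT, hS⟩)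
  rintro (_ | _) (_ | _) hne
  exacts [absurd rfl hne, hST.symm, hST, absurd rfl hne]

theorem exists_fin {U : Set (σ →₀ ℕ)} (hU : HasBoxDecomposition U) :
    ∃ (r : ℕ) (u : Fin r → σ →₀ ℕ) (Z : Fin r → Finset σ),
      Pairwise (Disjoint on fun i => stanleyBox (u i) (Z i)) ∧
        ⋃ i, stanleyBox (u i) (Z i) = U := by
  obtain ⟨ι, _, u, Z, hdisj, rfl⟩ := hU
  let e := Finite.equivFin ι
  exact ⟨Nat.card ι, u ∘ e.symm, Z ∘ e.symm, fun i j hij => hdisj (e.symm.injective.ne hij),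
    e.symm.surjective.iUnion_comp fun i => stanleyBox (u i) (Z i)⟩

open Finsupp in
theorem lift {n : ℕ} {V : Set (Fin n →₀ ℕ)} (hV : HasBoxDecomposition V) {P : ℕ → Prop}
    (hP : ∀ (u : Fin n →₀ ℕ) (Z : Finset (Fin n)),
      ∃ (u' : Fin (n + 1) →₀ ℕ) (Z' : Finset (Fin (n + 1))),
        stanleyBox u' Z' = {d | P (d 0) ∧ tail d ∈ stanleyBox u Z}) :
    HasBoxDecomposition {d : Fin (n + 1) →₀ ℕ | P (d 0) ∧ tail d ∈ V} := by
  obtain ⟨ι, _, u, Z, hdisj, rfl⟩ := hV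
  choose u' Z' hbox using hP
  refine ⟨ι, inferInstance, fun i => u' (u i) (Z i), fun i => Z' (u i) (Z i),
    fun i j hij => ?_, ?_⟩
  · simp only [onFun, hbox]
    exact ((hdisj hij).preimage tail).mono (fun d hd => hd.2) fun d hd => hd.2
  · ext d
    simp [hbox]

end HasBoxDecomposition

open Finsupp in
theorem IsUpperSet.hasBoxDecomposition {n : ℕ} {U : Set (Fin n →₀ ℕ)} (hU : IsUpperSet U) :
    HasBoxDecomposition U := by
  induction n with
  | zero => exact .of_finite (Set.toFinite U)
  | succ n ih =>
    obtain ⟨N, hN⟩ := hU.exists_slice_eq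
    have hslice k := ih (isUpperSet_slice hU k)
    have low (k : Fin N) : HasBoxDecomposition {d | d 0 = (k : ℕ) ∧ tail d ∈ slice U k} :=
      (hslice k).lift (P := (· = k)) fun u Z => ⟨_, _, stanleyBox_cons_map_succ k u Z⟩
    have high : HasBoxDecomposition {d | N ≤ d 0 ∧ tail d ∈ slice U N} :=
      (hslice N).lift (P := (N ≤ ·)) fun u Z =>
        ⟨_, _, stanleyBox_cons_insert_zero_map_succ N u Z⟩
    rw [eq_iUnion_slice_union_slice hN]
    refine .union ?_ (.iUnion ?_ low) high
    · refine Set.disjoint_iUnion_left.2 fun k => Set.disjoint_left.2 ?_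
      rintro d ⟨hk, -⟩ ⟨hNd, -⟩
      have := k.isLt
      omega
    · exact fun k l hkl => Set.disjoint_left.2 fun d hk hl => hkl (Fin.ext (hk.1.symm.trans hl.1))

namespace MvPolynomial

variable {R σ : Type*} [CommSemiring R]

theorem restrictSupport_iUnion {ι : Sort*} (s : ι → Set (σ →₀ ℕ)) :
    restrictSupport R (⋃ i, s i) = ⨆ i, restrictSupport R (s i) := by
  simp only [restrictSupport_eq_span, Set.image_iUnion, Submodule.span_iUnion]

theorem disjoint_restrictSupport {s t : Set (σ →₀ ℕ)} (h : Disjoint s t) :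
    Disjoint (restrictSupport R s) (restrictSupport R t) := by
  refine Submodule.disjoint_def.2 fun p hs ht => ?_
  rw [mem_restrictSupport_iff] at hs ht
  rw [← support_eq_empty, ← Finset.coe_eq_empty, ← Set.subset_empty_iff, ← h.inter_eq]
  exact Set.subset_inter hs ht

theorem iSupIndep_restrictSupport {ι : Type*} {s : ι → Set (σ →₀ ℕ)}
    (h : Pairwise (Disjoint on s)) : iSupIndep fun i => restrictSupport R (s i) := by
  intro i
  simp only [← restrictSupport_iUnion]
  exact disjoint_restrictSupport (Set.disjoint_iUnion₂_right.2 fun j hji => h hji.symm)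

theorem isUpperSet_setOf_monomial_one_mem (I : Ideal (MvPolynomial σ R)) :
    IsUpperSet {d | monomial d (1 : R) ∈ I} := by
  intro d d' hdd' hd
  rw [Set.mem_ofPred_eq, ← tsub_add_cancel_of_le hdd', ← mul_one (1 : R), ← monomial_mul]
  exact I.mul_mem_left _ hd

end MvPolynomial

theorem IsMonomialIdeal.restrictScalars_eq_restrictSupport {K σ : Type*} [Field K]
    {I : Ideal (MvPolynomial σ K)} (hI : IsMonomialIdeal I) :
    I.restrictScalars K = restrictSupport K {d | monomial d (1 : K) ∈ I} := by
  obtain ⟨G, rfl⟩ := hI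
  ext p
  classical
  simp only [Submodule.restrictScalars_mem, mem_restrictSupport_iff, Set.subset_def,
    Finset.mem_coe, Set.mem_ofPred_eq, mem_ideal_span_monomial_image,
    support_monomial, one_ne_zero, if_false, Finset.mem_singleton, forall_eq]

/-- Every monomial ideal `I ⊆ S = K[x_1,…,x_n]` admits a Stanley
decomposition `I = ⊕_{i=1}^r u_i K[Z_i]` as `K`-vector spaces. -/
theorem monomialIdeal_has_stanley_decomposition (K : Type*) [Field K] (n : ℕ)
    (I : Ideal (MvPolynomial (Fin n) K)) (hI : IsMonomialIdeal I) :
    ∃ (r : ℕ) (u : Fin r → (Fin n →₀ ℕ)) (Z : Fin r → Finset (Fin n)),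
      iSupIndep (fun i => stanleySpace K (u i) (Z i)) ∧
      (⨆ i, stanleySpace K (u i) (Z i)) = Submodule.restrictScalars K I := by
  obtain ⟨r, u, Z, hdisj, hunion⟩ :=
    (isUpperSet_setOf_monomial_one_mem I).hasBoxDecomposition.exists_fin
  refine ⟨r, u, Z, ?_, ?_⟩
  · simp only [stanleySpace_eq_restrictSupport]
    exact iSupIndep_restrictSupport hdisj
  · simp only [stanleySpace_eq_restrictSupport, ← restrictSupport_iUnion, hunion]
    exact hI.restrictScalars_eq_restrictSupport.symm
end

section
/- Let Δ be a simplicial complex on [n] = {1, ..., n} containing the face {n}, and set Δ_0 = {F ∈ Δ : n ∉ F} and Δ_1 = {F \ {n} : F ∈ Δ, n ∈ F}. If Δ_0 = ⊔_{i=1}^{r_0} [F_i, G_i] is a partition of Δ_0 and Δ_1 = ⊔_{j=1}^{r_1} [F'_j, G'_j] is a partition of Δ_1 (as simplicial complexes on [n-1]), then Δ = (⊔_{i=1}^{r_0} [F_i, G_i]) ⊔ (⊔_{j=1}^{r_1} [F'_j ∪ {n}, G'_j ∪ {n}]) is a partition of Δ. -/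
/-- `Δ` is a simplicial complex on the vertex set `V`: a collection of subsets of `V`
closed under taking subsets. -/
def IsSimplicialComplex {V : Type*} [DecidableEq V] (Δ : Finset (Finset V)) : Prop :=
  ∀ F ∈ Δ, ∀ G ⊆ F, G ∈ Δ

/-- `Δ = ⊔_i [F i, G i]` is a partition of the simplicial complex `Δ` into intervals:
each `[F i, G i] = {H : F i ⊆ H ⊆ G i}` (given by `Finset.Icc`) consists of faces of `Δ`,
the intervals are pairwise disjoint, and their union is `Δ`. -/
def IsPartition {V : Type*} [DecidableEq V] (Δ : Finset (Finset V)) {ι : Type*}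
    (F G : ι → Finset V) : Prop :=
  (∀ i, F i ∈ Δ ∧ G i ∈ Δ ∧ F i ⊆ G i) ∧
  (Pairwise fun i j => Disjoint (Finset.Icc (F i) (G i)) (Finset.Icc (F j) (G j))) ∧
  (∀ H, H ∈ Δ ↔ ∃ i, H ∈ Finset.Icc (F i) (G i))

/-!
Faces of `Δ` avoiding the vertex `n` form `Δ₀`, and the faces containing `n` are exactly the sets
`insert n H` with `H ∈ Δ₁`. Since `insert n` maps each interval `[F', G']` of faces avoiding `n`
bijectively onto `[F' ∪ {n}, G' ∪ {n}]`, it carries the partition of `Δ₁` to a partition of the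
faces containing `n`, and two partitions of disjoint families combine into a partition of their union.
-/

namespace Finset

variable {V : Type*} [DecidableEq V] {v : V}

theorem mem_Icc_insert_insert_iff {A B H : Finset V} (hvA : v ∉ A) :
    H ∈ Icc (insert v A) (insert v B) ↔ v ∈ H ∧ H.erase v ∈ Icc A B := by
  simp only [mem_Icc, insert_subset_iff, subset_insert_iff, subset_erase]
  tauto

theorem mem_image_insert_iff {Δ : Finset (Finset V)} (hv : ∀ H ∈ Δ, v ∉ H) {H : Finset V} :
    H ∈ Δ.image (insert v) ↔ v ∈ H ∧ H.erase v ∈ Δ := by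
  constructor
  · intro hH
    obtain ⟨K, hK, rfl⟩ := mem_image.1 hH
    exact ⟨mem_insert_self v K, (erase_insert (hv K hK)).symm ▸ hK⟩
  · rintro ⟨hvH, hH⟩
    exact mem_image.2 ⟨H.erase v, hH, insert_erase hvH⟩

theorem notMem_of_mem_image_erase {Δ : Finset (Finset V)} :
    ∀ H ∈ Δ.image (·.erase v), v ∉ H := by
  simp only [mem_image, forall_exists_index, and_imp, forall_apply_eq_imp_iff₂]
  exact fun K _ => notMem_erase v K

theorem image_insert_image_erase_filter_mem (Δ : Finset (Finset V)) :
    ((Δ.filter (v ∈ ·)).image (·.erase v)).image (insert v) = Δ.filter (v ∈ ·) := by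
  rw [image_image]
  exact (image_congr fun H hH => insert_erase (mem_filter.1 hH).2).trans image_id

end Finset

namespace IsPartition

open Finset

variable {V : Type*} [DecidableEq V] {ι κ : Type*} {Δ Δ' : Finset (Finset V)}
  {F G : ι → Finset V} {F' G' : κ → Finset V}

theorem Icc_subset (h : IsPartition Δ F G) (i : ι) : Icc (F i) (G i) ⊆ Δ :=
  fun H hH => (h.2.2 H).2 ⟨i, hH⟩

theorem union (h : IsPartition Δ F G) (h' : IsPartition Δ' F' G') (hdisj : Disjoint Δ Δ') :
    IsPartition (Δ ∪ Δ') (Sum.elim F F') (Sum.elim G G') := by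
  refine ⟨?_, ?_, ?_⟩
  · rintro (i | j)
    · obtain ⟨hF, hG, hFG⟩ := h.1 i
      exact ⟨mem_union_left _ hF, mem_union_left _ hG, hFG⟩
    · obtain ⟨hF, hG, hFG⟩ := h'.1 j
      exact ⟨mem_union_right _ hF, mem_union_right _ hG, hFG⟩
  · rintro (i | j) (i' | j') hne
    · exact h.2.1 fun hii' => hne (congrArg Sum.inl hii')
    · exact hdisj.mono (h.Icc_subset i) (h'.Icc_subset j')
    · exact (hdisj.mono (h.Icc_subset i') (h'.Icc_subset j)).symm
    · exact h'.2.1 fun hjj' => hne (congrArg Sum.inr hjj')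
  · intro H
    simp only [mem_union, h.2.2 H, h'.2.2 H, Sum.exists, Sum.elim_inl, Sum.elim_inr]

theorem image_insert {v : V} (h : IsPartition Δ F G) (hv : ∀ H ∈ Δ, v ∉ H) :
    IsPartition (Δ.image (insert v)) (fun i => insert v (F i)) (fun i => insert v (G i)) := by
  have hvF : ∀ i, v ∉ F i := fun i => hv _ (h.1 i).1
  refine ⟨fun i => ?_, fun i j hij => ?_, fun H => ?_⟩
  · obtain ⟨hF, hG, hFG⟩ := h.1 i
    exact ⟨mem_image_of_mem _ hF, mem_image_of_mem _ hG, insert_subset_insert v hFG⟩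
  · refine disjoint_left.2 fun H hi hj => ?_
    rw [mem_Icc_insert_insert_iff (hvF i)] at hi
    rw [mem_Icc_insert_insert_iff (hvF j)] at hj
    exact disjoint_left.1 (h.2.1 hij) hi.2 hj.2
  · simp only [mem_image_insert_iff hv, h.2.2, mem_Icc_insert_insert_iff (hvF _), exists_and_left]

end IsPartition

open Finset in
theorem janet_partition_general_case_general (n : ℕ) (Δ : Finset (Finset (Fin (n + 1))))
    (Δ₀ Δ₁ : Finset (Finset (Fin (n + 1))))
    (hΔ₀ : Δ₀ = Δ.filter (fun F => Fin.last n ∉ F))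
    (hΔ₁ : Δ₁ = (Δ.filter (fun F => Fin.last n ∈ F)).image (fun F => F.erase (Fin.last n)))
    (r₀ r₁ : ℕ) (F G : Fin r₀ → Finset (Fin (n + 1)))
    (F' G' : Fin r₁ → Finset (Fin (n + 1)))
    (h₀ : IsPartition Δ₀ F G) (h₁ : IsPartition Δ₁ F' G') :
    IsPartition Δ
      (Sum.elim F (fun j => insert (Fin.last n) (F' j)))
      (Sum.elim G (fun j => insert (Fin.last n) (G' j)) : Fin r₀ ⊕ Fin r₁ → _) := by
  subst hΔ₀ hΔ₁
  have h₁' := h₁.image_insert notMem_of_mem_image_erase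
  rw [image_insert_image_erase_filter_mem] at h₁'
  have h := h₀.union h₁' (disjoint_filter_filter_not Δ Δ (Fin.last n ∈ ·)).symm
  rwa [union_comm, filter_union_filter_not_eq] at h

/-- (Here the vertex set `[n]` is modelled as `Fin (n + 1)` with last
vertex `Fin.last n`.) Let `Δ` be a simplicial complex on `[n]` containing the face `{n}`,
and let `Δ₀ = {F ∈ Δ : n ∉ F}`, `Δ₁ = {F \ {n} : F ∈ Δ, n ∈ F}`. Given partitions
`Δ₀ = ⊔_{i=1}^{r₀} [Fᵢ, Gᵢ]` and `Δ₁ = ⊔_{j=1}^{r₁} [F'ⱼ, G'ⱼ]`, the family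
`(⊔_i [Fᵢ, Gᵢ]) ⊔ (⊔_j [F'ⱼ ∪ {n}, G'ⱼ ∪ {n}])` is a partition of `Δ`. -/
theorem janet_partition_general_case (n : ℕ) (Δ : Finset (Finset (Fin (n + 1))))
    (hΔ : IsSimplicialComplex Δ)
    (hvert : ({Fin.last n} : Finset (Fin (n + 1))) ∈ Δ)
    (Δ₀ Δ₁ : Finset (Finset (Fin (n + 1))))
    (hΔ₀ : Δ₀ = Δ.filter (fun F => Fin.last n ∉ F))
    (hΔ₁ : Δ₁ = (Δ.filter (fun F => Fin.last n ∈ F)).image (fun F => F.erase (Fin.last n)))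
    (r₀ r₁ : ℕ) (F G : Fin r₀ → Finset (Fin (n + 1)))
    (F' G' : Fin r₁ → Finset (Fin (n + 1)))
    (h₀ : IsPartition Δ₀ F G) (h₁ : IsPartition Δ₁ F' G') :
    IsPartition Δ
      (Sum.elim F (fun j => insert (Fin.last n) (F' j)))
      (Sum.elim G (fun j => insert (Fin.last n) (G' j)) : Fin r₀ ⊕ Fin r₁ → _) :=
  janet_partition_general_case_general n Δ Δ₀ Δ₁ hΔ₀ hΔ₁ r₀ r₁ F G F' G' h₀ h₁
end
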